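/- Let X̄, X̂ ∈ R^{n×p} (n ≥ p) and X(t) = X̄ + t(X̂ − X̄) for t ∈ [0,1]. Then ‖X(t)‖_* = ‖X̄‖_* for all t ∈ [0,1] if and only if ‖X̄‖_* = ‖X̂‖_* and there exists U ∈ R^{n×p} with UᵀU = I_p such that both X̄Uᵀ and X̂Uᵀ are symmetric positive semidefinite. -/

import Mathlib

open Matrix

/-- The square root of a positive semidefinite matrix, as defined in the older Mathlib
(removed since). -/
noncomputable def Matrix.PosSemidef.sqrt {n : Type*} [Fintype n] [DecidableEq n]
    {A : Matrix n n ℝ} (hA : A.PosSemidef) : Matrix n n ℝ :=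
  hA.1.eigenvectorUnitary.1 * diagonal ((√·) ∘ hA.1.eigenvalues) *
  (star hA.1.eigenvectorUnitary : Matrix n n ℝ)

noncomputable def nuclearNorm {m n : Type*} [Fintype m] [Fintype n] [DecidableEq n]
    (A : Matrix m n ℝ) : ℝ :=
  (Matrix.posSemidef_conjTranspose_mul_self A).sqrt.trace

noncomputable def opNorm {m n : Type*} [Fintype m] [Fintype n] [DecidableEq m] [DecidableEq n]
    (A : Matrix m n ℝ) : ℝ :=
  ‖(LinearMap.toContinuousLinearMap
      (Matrix.toEuclideanLin A : EuclideanSpace ℝ n →ₗ[ℝ] EuclideanSpace ℝ m))‖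

def finner {m n : Type*} [Fintype m] [Fintype n] (A B : Matrix m n ℝ) : ℝ :=
  (Aᵀ * B).trace

noncomputable def nuclearSubdiff {m n : Type*} [Fintype m] [Fintype n] [DecidableEq n]
    (X : Matrix m n ℝ) : Set (Matrix m n ℝ) :=
  {Y | ∀ Z, nuclearNorm X + finner Y (Z - X) ≤ nuclearNorm Z}

def rectDiag (n p : ℕ) (s : Fin p → ℝ) : Matrix (Fin n) (Fin p) ℝ :=
  Matrix.of fun i j => if (i : ℕ) = (j : ℕ) then s j else 0

def blockIR (n p r : ℕ) (R : Matrix (Fin (n - r)) (Fin (p - r)) ℝ) :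
    Matrix (Fin n) (Fin p) ℝ :=
  Matrix.of fun i j =>
    if h : (i : ℕ) < r ∨ (j : ℕ) < r then (if (i : ℕ) = (j : ℕ) then 1 else 0)
    else R ⟨i - r, by have := i.isLt; omega⟩ ⟨j - r, by have := j.isLt; omega⟩

/-! For a square matrix `B`, `tr B ≤ ‖B‖_*` with equality exactly when `B` is positive
semidefinite: in an orthonormal eigenbasis `vᵢ` of `|B| = √(BᵀB)`,
`⟪vᵢ, B vᵢ⟫ ≤ ‖B vᵢ‖ = ‖|B| vᵢ‖ = ⟪vᵢ, |B| vᵢ⟫`, with equality only if `B vᵢ = |B| vᵢ`.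
Right multiplication by `Uᵀ` with `UᵀU = 1` preserves the nuclear norm, and the polar
decomposition `M = U P` provides such a `U` with `M Uᵀ = U P Uᵀ` positive semidefinite.

If the nuclear norm is constant on the segment, polarize its midpoint by such a `U`: then
`‖X̄‖_* = tr (X(½) Uᵀ)` is the average of `tr (X̄ Uᵀ) ≤ ‖X̄‖_*` and `tr (X̂ Uᵀ) ≤ ‖X̂‖_* = ‖X̄‖_*`,
so both are equalities and `U` polarizes `X̄` and `X̂`. Conversely, if `U` polarizes both, each
`X(t) Uᵀ` is a convex combination of positive semidefinite matrices, so `‖X(t)‖_*` is its trace,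
which is affine in `t` and takes the same value at both ends.
-/

open scoped InnerProductSpace

section InnerProductSpace

variable {E : Type*} [NormedAddCommGroup E] [InnerProductSpace ℝ E]

lemma eq_norm_smul_of_inner_eq_norm {v y : E} (hv : ‖v‖ = 1) (h : ⟪v, y⟫_ℝ = ‖y‖) :
    y = ‖y‖ • v := by
  have := inner_eq_norm_mul_iff_real.mp (by rw [h, hv, one_mul])
  rwa [hv, one_smul, eq_comm] at this

variable [FiniteDimensional ℝ E] {S T : E →ₗ[ℝ] E}

namespace LinearMap

lemma norm_apply_eq_of_adjoint_comp_self_eq (hS : S.IsSymmetric) (h : T.adjoint ∘ₗ T = S ∘ₗ S)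
    (x : E) : ‖T x‖ = ‖S x‖ := by
  have hsq : ‖T x‖ ^ 2 = ‖S x‖ ^ 2 := by
    rw [← real_inner_self_eq_norm_sq, ← real_inner_self_eq_norm_sq, ← adjoint_inner_right,
      ← comp_apply, h, comp_apply, hS]
  exact (sq_eq_sq₀ (norm_nonneg _) (norm_nonneg _)).mp hsq

lemma IsPositive.inner_eigenvectorBasis_eq_norm (hS : S.IsPositive) {n : ℕ}
    (hn : Module.finrank ℝ E = n) (i : Fin n) :
    ⟪hS.isSymmetric.eigenvectorBasis hn i, S (hS.isSymmetric.eigenvectorBasis hn i)⟫_ℝ =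
      ‖S (hS.isSymmetric.eigenvectorBasis hn i)‖ := by
  rw [hS.isSymmetric.apply_eigenvectorBasis, real_inner_smul_right, real_inner_self_eq_norm_sq,
    norm_smul, OrthonormalBasis.norm_eq_one, RCLike.ofReal_real_eq_id, id_eq,
    Real.norm_of_nonneg (hS.nonneg_eigenvalues hn i)]
  ring

lemma IsPositive.inner_le_inner_eigenvectorBasis (hS : S.IsPositive)
    (h : T.adjoint ∘ₗ T = S ∘ₗ S) {n : ℕ} (hn : Module.finrank ℝ E = n) (i : Fin n) :
    ⟪hS.isSymmetric.eigenvectorBasis hn i, T (hS.isSymmetric.eigenvectorBasis hn i)⟫_ℝ ≤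
      ⟪hS.isSymmetric.eigenvectorBasis hn i, S (hS.isSymmetric.eigenvectorBasis hn i)⟫_ℝ := by
  set v := hS.isSymmetric.eigenvectorBasis hn i
  calc ⟪v, T v⟫_ℝ ≤ ‖v‖ * ‖T v‖ := real_inner_le_norm _ _
    _ = ‖S v‖ := by rw [OrthonormalBasis.norm_eq_one, one_mul,
      norm_apply_eq_of_adjoint_comp_self_eq hS.isSymmetric h]
    _ = ⟪v, S v⟫_ℝ := (hS.inner_eigenvectorBasis_eq_norm hn i).symm

lemma IsPositive.trace_le_of_adjoint_comp_self_eq (hS : S.IsPositive)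
    (h : T.adjoint ∘ₗ T = S ∘ₗ S) : T.trace ℝ E ≤ S.trace ℝ E := by
  rw [trace_eq_sum_inner T (hS.isSymmetric.eigenvectorBasis rfl),
    trace_eq_sum_inner S (hS.isSymmetric.eigenvectorBasis rfl)]
  exact Finset.sum_le_sum fun i _ => hS.inner_le_inner_eigenvectorBasis h rfl i

lemma IsPositive.eq_of_adjoint_comp_self_eq_of_trace_eq (hS : S.IsPositive)
    (h : T.adjoint ∘ₗ T = S ∘ₗ S) (htr : T.trace ℝ E = S.trace ℝ E) : T = S := by
  set b := hS.isSymmetric.eigenvectorBasis rfl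
  rw [trace_eq_sum_inner T b, trace_eq_sum_inner S b] at htr
  have hdiag := (Finset.sum_eq_sum_iff_of_le fun i _ =>
    hS.inner_le_inner_eigenvectorBasis h rfl i).mp htr
  refine b.toBasis.ext fun i => ?_
  have hnorm := norm_apply_eq_of_adjoint_comp_self_eq hS.isSymmetric h (b i)
  have hS_i := hS.inner_eigenvectorBasis_eq_norm rfl i
  have hT_i : ⟪b i, T (b i)⟫_ℝ = ‖T (b i)‖ := by
    rw [hdiag i (Finset.mem_univ i), hnorm]; exact hS_i
  rw [OrthonormalBasis.coe_toBasis, eq_norm_smul_of_inner_eq_norm (b.norm_eq_one i) hT_i,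
    eq_norm_smul_of_inner_eq_norm (b.norm_eq_one i) hS_i, hnorm]

end LinearMap

end InnerProductSpace

section NuclearNorm

variable {m n N : Type*} [Fintype m] [Fintype n] [Fintype N] [DecidableEq n] [DecidableEq N]

namespace Matrix

open scoped MatrixOrder in
lemma PosSemidef.sqrt_eq_cfcSqrt {A : Matrix N N ℝ} (hA : A.PosSemidef) :
    hA.sqrt = CFC.sqrt A := by
  rw [CFC.sqrt_eq_cfc, cfc_nnreal_eq_real _ A hA.nonneg, hA.1.cfc_eq, IsHermitian.cfc,
    Unitary.conjStarAlgAut_apply, PosSemidef.sqrt]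
  congr 3
  funext i
  simp [Real.coe_sqrt, Real.coe_toNNReal', hA.eigenvalues_nonneg i]

open scoped MatrixOrder in
lemma PosSemidef.posSemidef_sqrt {A : Matrix N N ℝ} (hA : A.PosSemidef) : hA.sqrt.PosSemidef := by
  rw [hA.sqrt_eq_cfcSqrt]
  exact (CFC.sqrt_nonneg A).posSemidef

open scoped MatrixOrder in
lemma PosSemidef.sqrt_mul_self {A : Matrix N N ℝ} (hA : A.PosSemidef) :
    hA.sqrt * hA.sqrt = A := by
  rw [hA.sqrt_eq_cfcSqrt]
  exact CFC.sqrt_mul_sqrt_self A hA.nonneg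

open scoped MatrixOrder in
lemma PosSemidef.sqrt_eq_of_mul_self_eq {A B : Matrix N N ℝ} (hA : A.PosSemidef)
    (hB : B.PosSemidef) (h : B * B = A) : hA.sqrt = B := by
  rw [hA.sqrt_eq_cfcSqrt]
  exact CFC.sqrt_unique h hB.nonneg

lemma trace_toEuclideanLin (B : Matrix N N ℝ) : (toEuclideanLin B).trace ℝ _ = B.trace :=
  trace_toLin_eq B (PiLp.basisFun 2 ℝ N)

lemma adjoint_toEuclideanLin_comp_self_eq_sqrt [DecidableEq m] (B : Matrix m N ℝ) :
    (toEuclideanLin B).adjoint ∘ₗ toEuclideanLin B =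
      toEuclideanLin (posSemidef_conjTranspose_mul_self B).sqrt ∘ₗ
        toEuclideanLin (posSemidef_conjTranspose_mul_self B).sqrt := by
  rw [← toEuclideanLin_conjTranspose_eq_adjoint, ← toLpLin_mul_same, ← toLpLin_mul_same,
    PosSemidef.sqrt_mul_self]

end Matrix

open Matrix

lemma nuclearNorm_eq_trace_of_mul_self_eq {X : Matrix m n ℝ} {P : Matrix n n ℝ}
    (hP : P.PosSemidef) (h : P * P = Xᵀ * X) : nuclearNorm X = P.trace := by
  rw [nuclearNorm, PosSemidef.sqrt_eq_of_mul_self_eq _ hP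
    (by rw [h, conjTranspose_eq_transpose_of_trivial])]

lemma nuclearNorm_eq_trace_of_posSemidef {B : Matrix N N ℝ} (hB : B.PosSemidef) :
    nuclearNorm B = B.trace :=
  nuclearNorm_eq_trace_of_mul_self_eq hB
    (by rw [← conjTranspose_eq_transpose_of_trivial, hB.isHermitian.eq])

lemma nuclearNorm_mul_transpose [DecidableEq m] {X U : Matrix m n ℝ} (hU : Uᵀ * U = 1) :
    nuclearNorm (X * Uᵀ) = nuclearNorm X := by
  have hX := posSemidef_conjTranspose_mul_self X
  have hP : (U * hX.sqrt * Uᵀ).PosSemidef := by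
    simpa only [conjTranspose_eq_transpose_of_trivial] using
      hX.posSemidef_sqrt.mul_mul_conjTranspose_same U
  refine (nuclearNorm_eq_trace_of_mul_self_eq hP ?_).trans ?_
  · calc U * hX.sqrt * Uᵀ * (U * hX.sqrt * Uᵀ) = U * (hX.sqrt * (Uᵀ * U) * hX.sqrt) * Uᵀ := by
          simp only [Matrix.mul_assoc]
      _ = (X * Uᵀ)ᵀ * (X * Uᵀ) := by
          rw [hU, Matrix.mul_one, hX.sqrt_mul_self, conjTranspose_eq_transpose_of_trivial,
            transpose_mul, transpose_transpose]
          simp only [Matrix.mul_assoc]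
  · rw [trace_mul_cycle, hU, one_mul]
    rfl

lemma trace_le_nuclearNorm (B : Matrix N N ℝ) : B.trace ≤ nuclearNorm B := by
  have hS := (posSemidef_conjTranspose_mul_self B).posSemidef_sqrt
  rw [nuclearNorm, ← trace_toEuclideanLin, ← trace_toEuclideanLin]
  exact (isPositive_toEuclideanLin_iff.mpr hS).trace_le_of_adjoint_comp_self_eq
    (adjoint_toEuclideanLin_comp_self_eq_sqrt B)

lemma posSemidef_of_trace_eq_nuclearNorm {B : Matrix N N ℝ} (h : B.trace = nuclearNorm B) :
    B.PosSemidef := by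
  have hS := (posSemidef_conjTranspose_mul_self B).posSemidef_sqrt
  rw [nuclearNorm, ← trace_toEuclideanLin, ← trace_toEuclideanLin] at h
  have hBS := (isPositive_toEuclideanLin_iff.mpr hS).eq_of_adjoint_comp_self_eq_of_trace_eq
    (adjoint_toEuclideanLin_comp_self_eq_sqrt B) h
  rwa [toEuclideanLin.injective hBS]

section Isometry

variable [DecidableEq m] {X U : Matrix m n ℝ}

lemma trace_mul_transpose_le_nuclearNorm (hU : Uᵀ * U = 1) : (X * Uᵀ).trace ≤ nuclearNorm X :=
  nuclearNorm_mul_transpose hU ▸ trace_le_nuclearNorm (X * Uᵀ)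

lemma posSemidef_mul_transpose_of_trace_eq (hU : Uᵀ * U = 1)
    (h : (X * Uᵀ).trace = nuclearNorm X) : (X * Uᵀ).PosSemidef :=
  posSemidef_of_trace_eq_nuclearNorm (h.trans (nuclearNorm_mul_transpose hU).symm)

lemma trace_mul_transpose_eq_nuclearNorm (hU : Uᵀ * U = 1) (hXU : (X * Uᵀ).PosSemidef) :
    (X * Uᵀ).trace = nuclearNorm X := by
  rw [← nuclearNorm_eq_trace_of_posSemidef hXU, nuclearNorm_mul_transpose hU]

end Isometry

end NuclearNorm

section PolarDecomposition

lemma exists_orthonormal_eq_norm_smul {E ι : Type*} [NormedAddCommGroup E]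
    [InnerProductSpace ℝ E] [FiniteDimensional ℝ E] [Fintype ι]
    (hι : Fintype.card ι ≤ Module.finrank ℝ E) {v : ι → E}
    (hv : Pairwise fun i j => ⟪v i, v j⟫_ℝ = 0) :
    ∃ w : ι → E, Orthonormal ℝ w ∧ ∀ i, v i = ‖v i‖ • w i := by
  classical
  -- normalize the nonzero `v i`, pad the index type up to `finrank ℝ E`, extend to a basis
  set k := Module.finrank ℝ E - Fintype.card ι
  have hcard : Module.finrank ℝ E = Fintype.card (ι ⊕ Fin k) := by
    rw [Fintype.card_sum, Fintype.card_fin]; omega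
  have hg : Orthonormal ℝ ((Sum.inl '' {i | v i ≠ 0}).domRestrict
      (Sum.elim (fun i => ‖v i‖⁻¹ • v i) (0 : Fin k → E))) := by
    rw [orthonormal_iff_ite]
    rintro ⟨_, i, hi, rfl⟩ ⟨_, j, hj, rfl⟩
    simp only [Set.domRestrict_apply, Sum.elim_inl, real_inner_smul_left,
      real_inner_smul_right, Subtype.ext_iff, Sum.inl.injEq]
    split_ifs with hij
    · subst hij
      have : ‖v i‖ ≠ 0 := norm_ne_zero_iff.mpr hi
      rw [real_inner_self_eq_norm_sq]
      field_simp
    · rw [hv hij, mul_zero, mul_zero]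
  obtain ⟨b, hb⟩ := hg.exists_orthonormalBasis_extension_of_card_eq hcard
  refine ⟨fun i => b (Sum.inl i), b.orthonormal.comp _ Sum.inl_injective, fun i => ?_⟩
  dsimp only
  by_cases hi : v i = 0
  · simp [hi]
  · rw [hb _ ⟨i, hi, rfl⟩, Sum.elim_inl, smul_smul, mul_inv_cancel₀ (norm_ne_zero_iff.mpr hi),
      one_smul]

namespace Matrix

variable {m n : Type*} [Fintype m] [Fintype n] [DecidableEq n]

lemma exists_eq_mul_diagonal_of_isDiag {C : Matrix m n ℝ}
    (hcard : Fintype.card n ≤ Fintype.card m) (hC : (Cᵀ * C).IsDiag) :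
    ∃ (W : Matrix m n ℝ) (d : n → ℝ), Wᵀ * W = 1 ∧ 0 ≤ d ∧ C = W * diagonal d := by
  obtain ⟨w, hw, hCw⟩ := exists_orthonormal_eq_norm_smul (E := EuclideanSpace ℝ m)
    (by simpa using hcard) (v := fun j => WithLp.toLp 2 (Cᵀ j))
    (fun i j hij => (inner_matrix_col_col C C i j).trans (hC hij))
  refine ⟨of fun a j => w j a, fun j => ‖WithLp.toLp 2 (Cᵀ j)‖, ?_, fun j => norm_nonneg _, ?_⟩
  · ext i j
    have := inner_matrix_col_col (𝕜 := ℝ) (of fun a j => w j a) (of fun a j => w j a) i j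
    rw [conjTranspose_eq_transpose_of_trivial] at this
    rw [← this]
    exact orthonormal_iff_ite.mp hw i j
  · ext a j
    simpa [mul_comm] using congrArg (· a) (hCw j)

lemma exists_polar_decomposition (hcard : Fintype.card n ≤ Fintype.card m) (M : Matrix m n ℝ) :
    ∃ (U : Matrix m n ℝ) (P : Matrix n n ℝ), Uᵀ * U = 1 ∧ P.PosSemidef ∧ M = U * P := by
  have hH : (Mᵀ * M).IsHermitian := by
    simpa only [conjTranspose_eq_transpose_of_trivial] using
      (posSemidef_conjTranspose_mul_self M).isHermitian
  set V : Matrix n n ℝ := (hH.eigenvectorUnitary : Matrix n n ℝ)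
  have hstar : star V = Vᵀ := by rw [star_eq_conjTranspose, conjTranspose_eq_transpose_of_trivial]
  have hVV : Vᵀ * V = 1 := hstar ▸ mem_unitaryGroup_iff'.mp hH.eigenvectorUnitary.2
  have hVV' : V * Vᵀ = 1 := hstar ▸ mem_unitaryGroup_iff.mp hH.eigenvectorUnitary.2
  have hdiag : (M * V)ᵀ * (M * V) = diagonal hH.eigenvalues := by
    have := hH.conjStarAlgAut_star_eigenvectorUnitary
    rw [Unitary.conjStarAlgAut_star_apply] at this
    rw [transpose_mul, ← hstar, Matrix.mul_assoc, ← Matrix.mul_assoc Mᵀ, ← Matrix.mul_assoc]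
    simpa using this
  obtain ⟨W, d, hW, hd, hMV⟩ :=
    exists_eq_mul_diagonal_of_isDiag hcard (hdiag ▸ isDiag_diagonal _)
  refine ⟨W * Vᵀ, V * diagonal d * Vᵀ, ?_, ?_, ?_⟩
  · calc (W * Vᵀ)ᵀ * (W * Vᵀ) = V * (Wᵀ * W) * Vᵀ := by
          simp only [transpose_mul, transpose_transpose, Matrix.mul_assoc]
      _ = 1 := by rw [hW, Matrix.mul_one, hVV']
  · simpa only [conjTranspose_eq_transpose_of_trivial] using
      (PosSemidef.diagonal hd).mul_mul_conjTranspose_same V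
  · calc M = M * V * Vᵀ := by rw [Matrix.mul_assoc, hVV', Matrix.mul_one]
      _ = W * (Vᵀ * V) * diagonal d * Vᵀ := by rw [hMV, hVV, Matrix.mul_one]
      _ = W * Vᵀ * (V * diagonal d * Vᵀ) := by simp only [Matrix.mul_assoc]

lemma exists_posSemidef_mul_transpose (hcard : Fintype.card n ≤ Fintype.card m)
    (M : Matrix m n ℝ) : ∃ U : Matrix m n ℝ, Uᵀ * U = 1 ∧ (M * Uᵀ).PosSemidef := by
  obtain ⟨U, P, hU, hP, rfl⟩ := exists_polar_decomposition hcard M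
  exact ⟨U, hU, by simpa only [conjTranspose_eq_transpose_of_trivial] using
    hP.mul_mul_conjTranspose_same U⟩

end Matrix

end PolarDecomposition

theorem flat_segment_iff_simultaneous_polarization {n p : ℕ} (hpn : p ≤ n)
    (Xb Xh : Matrix (Fin n) (Fin p) ℝ) :
    (∀ t : ℝ, t ∈ Set.Icc (0 : ℝ) 1 →
        nuclearNorm (Xb + t • (Xh - Xb)) = nuclearNorm Xb) ↔
      (nuclearNorm Xb = nuclearNorm Xh ∧
        ∃ U : Matrix (Fin n) (Fin p) ℝ, Uᵀ * U = 1 ∧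
          (Xb * Uᵀ).PosSemidef ∧ (Xh * Uᵀ).PosSemidef) := by
  have hseg : ∀ (U : Matrix (Fin n) (Fin p) ℝ) (t : ℝ),
      (Xb + t • (Xh - Xb)) * Uᵀ = (1 - t) • (Xb * Uᵀ) + t • (Xh * Uᵀ) := fun U t => by
    simp only [Matrix.add_mul, Matrix.smul_mul, Matrix.sub_mul]
    module
  constructor
  · intro hflat
    have hnorm : nuclearNorm Xb = nuclearNorm Xh := by
      simpa using (hflat 1 (by norm_num)).symm
    obtain ⟨U, hU, hmid⟩ := exists_posSemidef_mul_transpose (by simpa using hpn)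
      (Xb + (2⁻¹ : ℝ) • (Xh - Xb))
    have htr := trace_mul_transpose_eq_nuclearNorm hU hmid
    rw [hflat _ (by norm_num), hseg, Matrix.trace_add, Matrix.trace_smul, Matrix.trace_smul] at htr
    norm_num at htr
    have hb := trace_mul_transpose_le_nuclearNorm (X := Xb) hU
    have hh := trace_mul_transpose_le_nuclearNorm (X := Xh) hU
    exact ⟨hnorm, U, hU, posSemidef_mul_transpose_of_trace_eq hU (by linarith),
      posSemidef_mul_transpose_of_trace_eq hU (by linarith)⟩
  · rintro ⟨hnorm, U, hU, hb, hh⟩ t ⟨ht0, ht1⟩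
    have hpsd := (hb.smul (sub_nonneg.mpr ht1)).add (hh.smul ht0)
    rw [← hseg] at hpsd
    rw [← trace_mul_transpose_eq_nuclearNorm hU hpsd, hseg, Matrix.trace_add, Matrix.trace_smul,
      Matrix.trace_smul, trace_mul_transpose_eq_nuclearNorm hU hb,
      trace_mul_transpose_eq_nuclearNorm hU hh, ← hnorm, smul_eq_mul, smul_eq_mul]
    ring
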